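/- Let d ≥ 1 and ε > 0. For α > 0 define the bounded operator L_α on ℓ²(ℤ^d; ℂ) by (L_α f)_n = ε Σ_{m ∈ ℤ^d, m ≠ n} (f_n − f_m)/|n − m|₁^{d+α}, and let L = −ε δ² where (δ² f)_n = Σ_{j: |j−n|₁ = 1} f_j − 2d f_n. Then there is a constant C_d > 0 depending only on d such that for all α > 0, ‖L_α − L‖_{op} ≤ C_d ε (1 + 1/α) 2^{−α}; in particular L_α → L in operator norm as α → ∞. -/

import Mathlib

open scoped BigOperators

noncomputable section

/-- ℓ²(ℤ^d; ℂ): square-summable complex sequences indexed by ℤ^d. -/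
abbrev SeqD (d : ℕ) := lp (fun _ : Fin d → ℤ => ℂ) 2

/-- ℓ¹ norm on ℤ^d. -/
def l1norm {d : ℕ} (n : Fin d → ℤ) : ℤ := ∑ j, |n j|

/-- `Lα` acts as the long-range (fractional) coupling operator
`(Lα f)_n = ε Σ_{m ≠ n} (f_n − f_m)/|n−m|₁^{d+α}`. -/
def HasFracActionD {d : ℕ} (ε α : ℝ) (Lα : SeqD d →L[ℂ] SeqD d) : Prop :=
  ∀ f : SeqD d, ∀ n : Fin d → ℤ,
    (Lα f) n = (ε : ℂ) * ∑' m : Fin d → ℤ,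
      if m = n then 0
      else (f n - f m) / ((((l1norm (n - m) : ℝ)) ^ ((d : ℝ) + α) : ℝ) : ℂ)

/-- `L` acts as `−ε δ²`, where `(δ² f)_n = Σ_{|j−n|₁ = 1} f_j − 2d f_n`. -/
def HasNearestNeighborActionD {d : ℕ} (ε : ℝ) (L : SeqD d →L[ℂ] SeqD d) : Prop :=
  ∀ f : SeqD d, ∀ n : Fin d → ℤ,
    (L f) n = -(ε : ℂ) * ((∑' j : Fin d → ℤ, if l1norm (j - n) = 1 then f j else 0)
      - 2 * (d : ℂ) * f n)

namespace FracAux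

open scoped ENNReal

abbrev V (d : ℕ) := Fin d → ℤ

lemma l1_nonneg {d : ℕ} (k : V d) : 0 ≤ l1norm k :=
  Finset.sum_nonneg fun j _ => abs_nonneg _

lemma l1_eq_zero {d : ℕ} {k : V d} : l1norm k = 0 ↔ k = 0 := by
  constructor
  · intro h
    funext j
    have h0 : ∀ i ∈ Finset.univ, |k i| = 0 :=
      (Finset.sum_eq_zero_iff_of_nonneg (fun i _ => abs_nonneg _)).1 h
    simpa using abs_eq_zero.1 (h0 j (Finset.mem_univ j))
  · rintro rfl; simp [l1norm]

lemma l1_neg {d : ℕ} (k : V d) : l1norm (-k) = l1norm k := by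
  simp [l1norm]

lemma abs_le_l1 {d : ℕ} (k : V d) (j : Fin d) : |k j| ≤ l1norm k :=
  Finset.single_le_sum (fun i _ => abs_nonneg (k i)) (Finset.mem_univ j)

/-- the weight `|k|₁^{d+α}`. -/
def W (d : ℕ) (α : ℝ) (k : V d) : ℝ := (l1norm k : ℝ) ^ ((d : ℝ) + α)

def w (d : ℕ) (α : ℝ) (k : V d) : ℝ := (W d α k)⁻¹

/-- the tail kernel: `|k|₁^{-(d+α)}` for `|k|₁ ≥ 2`, `0` otherwise. -/
def K (d : ℕ) (α : ℝ) (k : V d) : ℝ := if 2 ≤ l1norm k then w d α k else 0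

lemma w_nonneg (d : ℕ) (α : ℝ) (k : V d) : 0 ≤ w d α k := by
  have : (0:ℝ) ≤ W d α k := Real.rpow_nonneg (by exact_mod_cast l1_nonneg k) _
  exact inv_nonneg.2 this

lemma K_nonneg (d : ℕ) (α : ℝ) (k : V d) : 0 ≤ K d α k := by
  unfold K; split
  · exact w_nonneg d α k
  · exact le_rfl

lemma w_of_l1_one {d : ℕ} {α : ℝ} {k : V d} (h : l1norm k = 1) : w d α k = 1 := by
  simp [w, W, h]

/-- the sphere of radius `r` as a finset. -/
def sph (d : ℕ) (r : ℕ) : Finset (V d) :=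
  (Fintype.piFinset fun _ => Finset.Icc (-(r:ℤ)) (r:ℤ)).filter fun k => l1norm k = r

lemma mem_sph {d : ℕ} {r : ℕ} {k : V d} : k ∈ sph d r ↔ l1norm k = r := by
  unfold sph
  rw [Finset.mem_filter]
  constructor
  · exact fun h => h.2
  · intro h
    refine ⟨?_, h⟩
    rw [Fintype.mem_piFinset]
    intro j
    have := abs_le_l1 k j
    rw [h] at this
    rw [Finset.mem_Icc]
    exact abs_le.1 this

lemma card_sph_le (d' : ℕ) (r : ℕ) (hr : 1 ≤ r) :
    (sph (d'+1) r).card ≤ 3^(d'+1) * r^d' := by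
  classical
  set T : Finset ((Fin d' → ℤ) × ℤ) :=
    (Fintype.piFinset fun _ : Fin d' => Finset.Icc (-(r:ℤ)) (r:ℤ)) ×ˢ ({-1,0,1} : Finset ℤ)
    with hT
  have hmaps : ∀ k ∈ sph (d'+1) r,
      (Fin.init k, Int.sign (k (Fin.last d'))) ∈ T := by
    intro k hk
    rw [mem_sph] at hk
    rw [hT, Finset.mem_product]
    constructor
    · rw [Fintype.mem_piFinset]
      intro j
      have := abs_le_l1 k (Fin.castSucc j)
      rw [hk] at this
      rw [Finset.mem_Icc]
      exact abs_le.1 this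
    · rcases lt_trichotomy (k (Fin.last d')) 0 with h | h | h
      · simp [Int.sign_eq_neg_one_of_neg h]
      · simp [h]
      · simp [Int.sign_eq_one_of_pos h]
  have hinj : ∀ k ∈ sph (d'+1) r, ∀ k' ∈ sph (d'+1) r,
      (Fin.init k, Int.sign (k (Fin.last d'))) =
        (Fin.init k', Int.sign (k' (Fin.last d'))) → k = k' := by
    intro k hk k' hk' h
    rw [mem_sph] at hk hk'
    have hinit : Fin.init k = Fin.init k' := congrArg Prod.fst h
    have hsign : Int.sign (k (Fin.last d')) = Int.sign (k' (Fin.last d')) :=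
      congrArg Prod.snd h
    have hsum : ∀ (z : V (d'+1)), l1norm z =
        (∑ i : Fin d', |Fin.init z i|) + |z (Fin.last d')| := by
      intro z
      rw [l1norm, Fin.sum_univ_castSucc]
      rfl
    have habs : |k (Fin.last d')| = |k' (Fin.last d')| := by
      have h1 := hsum k
      have h2 := hsum k'
      rw [hk] at h1; rw [hk'] at h2
      rw [hinit] at h1
      omega
    have hlast : k (Fin.last d') = k' (Fin.last d') := by
      rw [← Int.sign_mul_abs (k (Fin.last d')), ← Int.sign_mul_abs (k' (Fin.last d')),
        hsign, habs]
    funext i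
    refine Fin.lastCases hlast (fun j => ?_) i
    exact congrFun hinit j
  have hcard := Finset.card_le_card_of_injOn _ hmaps hinj
  have hTcard : T.card = (2*r+1)^d' * 3 := by
    rw [hT, Finset.card_product, Fintype.card_piFinset]
    have h1 : (Finset.Icc (-(r:ℤ)) (r:ℤ)).card = 2*r+1 := by
      rw [Int.card_Icc]
      omega
    have h2 : ({-1,0,1} : Finset ℤ).card = 3 := by decide
    simp [h1, h2]
  have : (2*r+1)^d' * 3 ≤ 3^(d'+1) * r^d' := by
    have h1 : (2*r+1)^d' ≤ (3*r)^d' := Nat.pow_le_pow_left (by omega) d'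
    calc (2*r+1)^d' * 3 ≤ (3*r)^d' * 3 := Nat.mul_le_mul_right 3 h1
      _ = 3^(d'+1) * r^d' := by rw [Nat.mul_pow]; ring
  omega

/-- the unit vector `±e_j`. -/
def uv (d : ℕ) (p : Fin d × Bool) : V d := Pi.single p.1 (cond p.2 1 (-1))

lemma l1_single {d : ℕ} (j : Fin d) (v : ℤ) : l1norm (Pi.single j v) = |v| := by
  classical
  rw [l1norm]
  rw [Finset.sum_eq_single j]
  · rw [Pi.single_eq_same]
  · intro i _ hij
    rw [Pi.single_eq_of_ne hij, abs_zero]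
  · intro h
    exact absurd (Finset.mem_univ j) h

lemma card_sph_one (d : ℕ) : (sph d 1).card = 2 * d := by
  classical
  have himg : sph d 1 = Finset.image (uv d) Finset.univ := by
    ext k
    rw [mem_sph, Finset.mem_image]
    constructor
    · intro hk
      -- find the unique nonzero coordinate
      have hne : k ≠ 0 := by
        intro h0
        rw [h0] at hk
        simp [l1_eq_zero.2 rfl] at hk
      have : ∃ j, k j ≠ 0 := by
        by_contra h
        push_neg at h
        exact hne (funext h)
      obtain ⟨j, hj⟩ := this
      have h1 : 1 ≤ |k j| := Int.one_le_abs (by omega)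
      have hb : (0:ℤ) ≤ ∑ i ∈ Finset.univ.erase j, |k i| :=
        Finset.sum_nonneg fun i _ => abs_nonneg _
      have hsplit : |k j| + ∑ i ∈ Finset.univ.erase j, |k i| = ∑ i, |k i| := by
        simpa using Finset.add_sum_erase Finset.univ (fun i => |k i|) (Finset.mem_univ j)
      have hl : l1norm k = 1 := by exact_mod_cast hk
      rw [l1norm] at hl
      have hrest : ∑ i ∈ Finset.univ.erase j, |k i| = 0 := by omega
      have hzero : ∀ i, i ≠ j → k i = 0 := by
        intro i hij
        have := (Finset.sum_eq_zero_iff_of_nonneg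
          (fun i _ => abs_nonneg (k i))).1 hrest i (by simp [hij])
        exact abs_eq_zero.1 this
      have habs : |k j| = 1 := by omega
      have hk_eq : k = Pi.single j (k j) := by
        funext i
        by_cases hij : i = j
        · subst hij; rw [Pi.single_eq_same]
        · rw [Pi.single_eq_of_ne hij]; exact hzero i hij
      rcases (abs_eq (by norm_num : (0:ℤ) ≤ 1)).1 habs with h | h
      · exact ⟨(j, true), Finset.mem_univ _, by rw [hk_eq, h]; rfl⟩
      · exact ⟨(j, false), Finset.mem_univ _, by rw [hk_eq, h]; rfl⟩
    · rintro ⟨⟨j, s⟩, -, rfl⟩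
      rw [uv, l1_single]
      cases s <;> simp
  rw [himg]
  have hinj : Function.Injective (uv d) := by
    rintro ⟨j, s⟩ ⟨j', s'⟩ h
    have hj : j = j' := by
      by_contra hne
      have := congrFun h j
      rw [uv, uv] at this
      simp only [Pi.single_eq_same] at this
      rw [Pi.single_eq_of_ne (Ne.symm ?_)] at this
      · cases s <;> simp_all
      · exact fun hh => hne hh.symm
    subst hj
    have := congrFun h j
    rw [uv, uv] at this
    simp only [Pi.single_eq_same] at this
    cases s <;> cases s' <;> simp_all
  rw [Finset.card_image_of_injective _ hinj]
  simp [Fintype.card_prod]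
  ring

lemma key_ineq (α : ℝ) (hα : 0 < α) {x : ℝ} (hx : 2 ≤ x) :
    α * x ^ (-(1+α)) ≤ (x-1) ^ (-α) - x ^ (-α) := by
  have hx0 : (0:ℝ) < x := by linarith
  have hy : (0:ℝ) < 1 - 1/x := by
    rw [sub_pos, div_lt_one hx0]; linarith
  have hlog : Real.log (1 - 1/x) ≤ -(1/x) := by
    have := Real.log_le_sub_one_of_pos hy
    linarith
  have h1 : 1 + α * (1/x) ≤ (1 - 1/x) ^ (-α) := by
    rw [Real.rpow_def_of_pos hy]
    calc 1 + α * (1/x) ≤ Real.exp (α * (1/x)) := by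
          have := Real.add_one_le_exp (α * (1/x)); linarith
      _ ≤ Real.exp (Real.log (1 - 1/x) * -α) := by
          apply Real.exp_le_exp.2
          nlinarith [hα.le]
  have hxa : (0:ℝ) < x ^ (-α) := Real.rpow_pos_of_pos hx0 _
  have h2 : (1 + α * (1/x)) * x ^ (-α) ≤ (1 - 1/x) ^ (-α) * x ^ (-α) :=
    mul_le_mul_of_nonneg_right h1 hxa.le
  have h3 : (1 - 1/x) ^ (-α) * x ^ (-α) = (x - 1) ^ (-α) := by
    rw [← Real.mul_rpow hy.le hx0.le]
    congr 1
    field_simp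
  have h4 : x ^ (-(1+α)) = x ^ (-α) * x⁻¹ := by
    rw [show -(1+α) = -α + (-1) by ring, Real.rpow_add hx0, Real.rpow_neg_one]
  rw [h3] at h2
  rw [h4]
  have hexp : (1 + α * (1/x)) * x ^ (-α) = x ^ (-α) + α * (x ^ (-α) * x⁻¹) := by
    rw [one_div]; ring
  rw [hexp] at h2
  linarith

lemma sum_Icc_le (α : ℝ) (hα : 0 < α) (R : ℕ) :
    ∑ r ∈ Finset.Icc 2 R, ((r:ℝ)) ^ (-(1+α)) ≤ (1 + 1/α) * 2 ^ (-α) := by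
  have h2pos : (0:ℝ) ≤ (2:ℝ) ^ (-α) := Real.rpow_nonneg (by norm_num) _
  have hinv : (0:ℝ) ≤ α⁻¹ := inv_nonneg.2 hα.le
  have hrhs : (1 + 1/α) * 2 ^ (-α) = (2:ℝ) ^ (-α) + α⁻¹ * 2 ^ (-α) := by
    rw [one_div]; ring
  by_cases hR : 2 ≤ R
  · have main : ∀ R : ℕ, 2 ≤ R → ∑ r ∈ Finset.Icc 2 R, ((r:ℝ)) ^ (-(1+α)) ≤
        (2:ℝ) ^ (-α) + α⁻¹ * (2:ℝ) ^ (-α) - α⁻¹ * (R:ℝ) ^ (-α) := by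
      intro R hR
      induction R, hR using Nat.le_induction with
      | base =>
        rw [show Finset.Icc 2 2 = {2} by rfl, Finset.sum_singleton]
        have h1 : ((2:ℕ):ℝ) ^ (-(1+α)) ≤ ((2:ℕ):ℝ) ^ (-α) := by
          apply Real.rpow_le_rpow_of_exponent_le (by norm_num)
          linarith
        push_cast at h1 ⊢
        linarith
      | succ R hR2 ih =>
        rw [Finset.sum_Icc_succ_top (by omega : 2 ≤ R + 1)]
        have hkey := key_ineq α hα (x := ((R:ℝ) + 1))
          (by exact_mod_cast by omega : (2:ℝ) ≤ (R:ℝ)+1)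
        rw [show (R:ℝ) + 1 - 1 = (R:ℝ) by ring] at hkey
        have hstep : ((R:ℝ)+1) ^ (-(1+α)) ≤
            α⁻¹ * (R:ℝ) ^ (-α) - α⁻¹ * ((R:ℝ)+1) ^ (-α) := by
          rw [← mul_sub, ← div_eq_inv_mul]
          exact (le_div_iff₀' hα).2 hkey
        push_cast
        linarith
    have hRge : (0:ℝ) ≤ (R:ℝ) ^ (-α) := Real.rpow_nonneg (by positivity) _
    have := main R hR
    rw [hrhs]
    nlinarith
  · rw [Finset.Icc_eq_empty (by omega), Finset.sum_empty, hrhs]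
    positivity

lemma w_sph {d : ℕ} {α : ℝ} {r : ℕ} {k : V d} (hk : k ∈ sph d r) :
    w d α k = ((r:ℝ)) ^ (-((d:ℝ)+α)) := by
  rw [mem_sph] at hk
  rw [w, W, hk, Real.rpow_neg (by positivity)]
  norm_num

lemma K_sum_le (d' : ℕ) (α : ℝ) (hα : 0 < α) (s : Finset (V (d'+1))) :
    ∑ k ∈ s, K (d'+1) α k ≤ (3:ℝ)^(d'+1) * ((1 + 1/α) * 2 ^ (-α)) := by
  classical
  set R := s.sup (fun k => (l1norm k).toNat) with hRdef
  set t := (Finset.Icc 2 R).biUnion (fun r => sph (d'+1) r) with ht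
  have hsub : s.filter (fun k => 2 ≤ l1norm k) ⊆ t := by
    intro k hk
    rw [Finset.mem_filter] at hk
    rw [ht, Finset.mem_biUnion]
    refine ⟨(l1norm k).toNat, ?_, ?_⟩
    · rw [Finset.mem_Icc]
      constructor
      · omega
      · exact Finset.le_sup (f := fun k => (l1norm k).toNat) hk.1
    · rw [mem_sph]
      omega
  have h1 : ∑ k ∈ s, K (d'+1) α k = ∑ k ∈ s.filter (fun k => 2 ≤ l1norm k), K (d'+1) α k := by
    rw [Finset.sum_filter_of_ne]
    intro k _ hne
    by_contra h
    exact hne (by rw [K, if_neg h])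
  have h2 : ∑ k ∈ s.filter (fun k => 2 ≤ l1norm k), K (d'+1) α k ≤ ∑ k ∈ t, K (d'+1) α k :=
    Finset.sum_le_sum_of_subset_of_nonneg hsub (fun k _ _ => K_nonneg (d'+1) α k)
  have hdisj : ∀ r₁ ∈ Finset.Icc 2 R, ∀ r₂ ∈ Finset.Icc 2 R, r₁ ≠ r₂ →
      Disjoint (sph (d'+1) r₁) (sph (d'+1) r₂) := by
    intro r₁ _ r₂ _ hne
    rw [Finset.disjoint_left]
    intro k hk1 hk2
    rw [mem_sph] at hk1 hk2
    omega
  have h3 : ∑ k ∈ t, K (d'+1) α k = ∑ r ∈ Finset.Icc 2 R, ∑ k ∈ sph (d'+1) r, K (d'+1) α k := by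
    rw [ht, Finset.sum_biUnion hdisj]
  have h4 : ∀ r ∈ Finset.Icc 2 R, ∑ k ∈ sph (d'+1) r, K (d'+1) α k ≤ (3:ℝ)^(d'+1) * ((r:ℝ)) ^ (-(1+α)) := by
    intro r hr
    rw [Finset.mem_Icc] at hr
    have hr2 : 2 ≤ r := hr.1
    have hrpos : (0:ℝ) < (r:ℝ) := by exact_mod_cast (by omega : 0 < r)
    have hsum : ∑ k ∈ sph (d'+1) r, K (d'+1) α k = (sph (d'+1) r).card * ((r:ℝ)) ^ (-((((d'+1):ℕ):ℝ)+α)) := by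
      rw [Finset.sum_congr rfl (g := fun _ => ((r:ℝ)) ^ (-((((d'+1):ℕ):ℝ)+α))) (fun k hk => ?_),
        Finset.sum_const, nsmul_eq_mul]
      have hl := mem_sph.1 hk
      rw [K, if_pos (by rw [hl]; exact_mod_cast hr2)]
      exact w_sph hk
    have hrpow : ((r:ℝ)) ^ (d':ℕ) * ((r:ℝ)) ^ (-((((d'+1):ℕ):ℝ)+α)) = ((r:ℝ)) ^ (-(1+α)) := by
      rw [← Real.rpow_natCast (r:ℝ) d', ← Real.rpow_add hrpos]
      congr 1
      push_cast
      ring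
    have hc : ((sph (d'+1) r).card : ℝ) ≤ ((3^(d'+1) * r^d' : ℕ) : ℝ) := by
      exact_mod_cast (card_sph_le d' r (by omega) :
        (sph (d'+1) r).card ≤ 3^(d'+1) * r^d')
    rw [hsum]
    calc ((sph (d'+1) r).card : ℝ) * ((r:ℝ)) ^ (-((((d'+1):ℕ):ℝ)+α))
        ≤ ((3^(d'+1) * r^d' : ℕ) : ℝ) * ((r:ℝ)) ^ (-((((d'+1):ℕ):ℝ)+α)) :=
          mul_le_mul_of_nonneg_right hc (Real.rpow_nonneg hrpos.le _)
      _ = (3:ℝ)^(d'+1) * (((r:ℝ)) ^ (d':ℕ) * ((r:ℝ)) ^ (-((((d'+1):ℕ):ℝ)+α))) := by push_cast; ring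
      _ = (3:ℝ)^(d'+1) * ((r:ℝ)) ^ (-(1+α)) := by rw [hrpow]
  calc ∑ k ∈ s, K (d'+1) α k
      = ∑ k ∈ s.filter (fun k => 2 ≤ l1norm k), K (d'+1) α k := h1
    _ ≤ ∑ k ∈ t, K (d'+1) α k := h2
    _ = ∑ r ∈ Finset.Icc 2 R, ∑ k ∈ sph (d'+1) r, K (d'+1) α k := h3
    _ ≤ ∑ r ∈ Finset.Icc 2 R, (3:ℝ)^(d'+1) * ((r:ℝ)) ^ (-(1+α)) := Finset.sum_le_sum h4
    _ = (3:ℝ)^(d'+1) * ∑ r ∈ Finset.Icc 2 R, ((r:ℝ)) ^ (-(1+α)) := by rw [Finset.mul_sum]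
    _ ≤ (3:ℝ)^(d'+1) * ((1+1/α) * 2^(-α)) :=
        mul_le_mul_of_nonneg_left (sum_Icc_le α hα R) (by positivity)

lemma K_summable (d' : ℕ) (α : ℝ) (hα : 0 < α) : Summable (K (d'+1) α) :=
  summable_of_sum_le (fun k => K_nonneg _ _ k) (K_sum_le d' α hα)

lemma K_tsum_le (d' : ℕ) (α : ℝ) (hα : 0 < α) :
    ∑' k, K (d'+1) α k ≤ (3:ℝ)^(d'+1) * ((1 + 1/α) * 2 ^ (-α)) :=
  Summable.tsum_le_of_sum_le (K_summable d' α hα) (K_sum_le d' α hα)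

/-- the full off-origin weight. -/
def w0 (d : ℕ) (α : ℝ) (k : V d) : ℝ := if k = 0 then 0 else w d α k

lemma w0_split (d : ℕ) (α : ℝ) (k : V d) :
    w0 d α k = (if l1norm k = 1 then w d α k else 0) + K d α k := by
  rcases eq_or_ne k 0 with rfl | hk
  · have h0 : l1norm (0 : V d) = 0 := l1_eq_zero.2 rfl
    simp [w0, K, h0]
  · have h1 : 1 ≤ l1norm k := by
      have := l1_nonneg k
      have := (not_iff_not.2 (l1_eq_zero (k := k))).2 hk
      omega
    rw [w0, if_neg hk, K]
    rcases eq_or_lt_of_le h1 with h | h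
    · rw [if_pos h.symm, if_neg (by omega)]
      ring
    · rw [if_neg (by omega), if_pos (by omega)]
      ring

lemma sphere1_summable (d : ℕ) (α : ℝ) :
    Summable (fun k : V d => if l1norm k = 1 then w d α k else 0) := by
  apply summable_of_ne_finset_zero (s := sph d 1)
  intro k hk
  rw [if_neg]
  intro h
  exact hk (mem_sph.2 (by exact_mod_cast h))

lemma sphere1_tsum (d : ℕ) (α : ℝ) :
    ∑' k : V d, (if l1norm k = 1 then w d α k else 0) = 2 * d := by
  rw [tsum_eq_sum (s := sph d 1) (fun k hk => by
    rw [if_neg]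
    intro h
    exact hk (mem_sph.2 (by exact_mod_cast h)))]
  rw [Finset.sum_congr rfl (g := fun _ => (1:ℝ)) (fun k hk => ?_), Finset.sum_const,
    nsmul_eq_mul, mul_one, card_sph_one]
  · push_cast; ring
  · have hl : l1norm k = 1 := by exact_mod_cast mem_sph.1 hk
    rw [if_pos hl, w_of_l1_one hl]

lemma w0_summable (d' : ℕ) (α : ℝ) (hα : 0 < α) : Summable (w0 (d'+1) α) := by
  have := (sphere1_summable (d'+1) α).add (K_summable d' α hα)
  apply this.congr
  intro k
  exact (w0_split (d'+1) α k).symm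

lemma w0_tsum (d' : ℕ) (α : ℝ) (hα : 0 < α) :
    ∑' k, w0 (d'+1) α k = 2 * (d'+1) + ∑' k, K (d'+1) α k := by
  calc ∑' k, w0 (d'+1) α k
      = ∑' k, ((if l1norm k = 1 then w (d'+1) α k else 0) + K (d'+1) α k) :=
        tsum_congr (w0_split (d'+1) α)
    _ = (∑' k : V (d'+1), (if l1norm k = 1 then w (d'+1) α k else 0)) + ∑' k, K (d'+1) α k :=
        Summable.tsum_add (sphere1_summable (d'+1) α) (K_summable d' α hα)
    _ = 2 * (d'+1) + ∑' k, K (d'+1) α k := by rw [sphere1_tsum]; push_cast; ring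

lemma lp_two_ne_zero : (2:ℝ≥0∞) ≠ 0 := by norm_num

lemma two_toReal_pos : 0 < (2:ℝ≥0∞).toReal := by norm_num

/-- translation of an `ℓ²` element. -/
def shift {d : ℕ} (k : V d) (f : SeqD d) : SeqD d :=
  ⟨fun n => f (n - k), by
    apply memℓp_gen
    have hf : Summable fun i : V d => ‖f i‖ ^ (2:ℝ≥0∞).toReal :=
      (memℓp_gen_iff two_toReal_pos).1 (lp.memℓp f)
    exact ((Equiv.subRight k).summable_iff
      (f := fun i : V d => ‖f i‖ ^ (2:ℝ≥0∞).toReal)).2 hf⟩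

lemma shift_apply {d : ℕ} (k : V d) (f : SeqD d) (n : V d) :
    (shift k f) n = f (n - k) := rfl

lemma norm_shift {d : ℕ} (k : V d) (f : SeqD d) : ‖shift k f‖ = ‖f‖ := by
  rw [lp.norm_eq_tsum_rpow two_toReal_pos, lp.norm_eq_tsum_rpow two_toReal_pos]
  congr 1
  exact (Equiv.subRight k).tsum_eq (fun i : V d => ‖f i‖ ^ (2:ℝ≥0∞).toReal)

/-- evaluation at a point, as a continuous linear map. -/
def evalCLM (d : ℕ) (n : V d) : SeqD d →L[ℂ] ℂ :=
  LinearMap.mkContinuous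
    { toFun := fun f => f n
      map_add' := fun f g => by simp [lp.coeFn_add]
      map_smul' := fun c f => by simp [lp.coeFn_smul] }
    1 (fun f => by
      show ‖f n‖ ≤ 1 * ‖f‖; simpa using lp.norm_apply_le_norm lp_two_ne_zero f n)

lemma evalCLM_apply {d : ℕ} (n : V d) (f : SeqD d) : evalCLM d n f = f n := rfl

lemma pointwise (d' : ℕ) {α : ℝ} (hα : 0 < α) (f : SeqD (d'+1)) (n : V (d'+1)) :
    (∑' m : V (d'+1), if m = n then 0
      else (f n - f m) / ((((l1norm (n - m) : ℝ)) ^ (((d'+1 : ℕ) : ℝ) + α) : ℝ) : ℂ))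
    = ((∑' k, K (d'+1) α k : ℝ) : ℂ) * f n
      - (∑' k : V (d'+1), ((K (d'+1) α k : ℝ) : ℂ) * f (n - k))
      - (∑' j : V (d'+1), if l1norm (j - n) = 1 then f j else 0)
      + 2 * ((d'+1 : ℕ) : ℂ) * f n := by
  classical
  have hKsum := K_summable d' α hα
  have hw0sum := w0_summable d' α hα
  set A : V (d'+1) → ℂ := fun k => ((w0 (d'+1) α k : ℝ) : ℂ) * f n with hA
  set B : V (d'+1) → ℂ := fun k => if l1norm k = 1 then f (n - k) else 0 with hB
  set C : V (d'+1) → ℂ := fun k => ((K (d'+1) α k : ℝ) : ℂ) * f (n - k) with hC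
  have hSA : Summable A := (Complex.summable_ofReal.2 hw0sum).mul_right (f n)
  have hSB : Summable B := by
    apply summable_of_ne_finset_zero (s := sph (d'+1) 1)
    intro k hk
    rw [hB]
    exact if_neg (fun h => hk (mem_sph.2 (by exact_mod_cast h)))
  have hSC : Summable C := by
    apply Summable.of_norm
    apply Summable.of_nonneg_of_le (fun k => norm_nonneg _) _ (hKsum.mul_right ‖f‖)
    intro k
    rw [hC, norm_mul, Complex.norm_real, Real.norm_eq_abs,
      abs_of_nonneg (K_nonneg _ _ _)]
    exact mul_le_mul_of_nonneg_left (lp.norm_apply_le_norm lp_two_ne_zero f (n-k))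
      (K_nonneg _ _ _)
  have h1 : (∑' m : V (d'+1), if m = n then 0
      else (f n - f m) / ((((l1norm (n - m) : ℝ)) ^ (((d'+1 : ℕ) : ℝ) + α) : ℝ) : ℂ))
      = ∑' k : V (d'+1), (if k = 0 then (0:ℂ)
        else (f n - f (n - k)) * ((w (d'+1) α k : ℝ) : ℂ)) := by
    rw [← (Equiv.subLeft n).tsum_eq (fun m : V (d'+1) => if m = n then (0:ℂ)
      else (f n - f m) / ((((l1norm (n - m) : ℝ)) ^ (((d'+1 : ℕ) : ℝ) + α) : ℝ) : ℂ))]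
    apply tsum_congr
    intro k
    simp only [Equiv.subLeft_apply, sub_sub_cancel, sub_eq_self]
    split
    · rfl
    · rw [div_eq_mul_inv, ← Complex.ofReal_inv]
      rfl
  have h2 : ∀ k : V (d'+1), (if k = 0 then (0:ℂ)
      else (f n - f (n - k)) * ((w (d'+1) α k : ℝ) : ℂ)) = A k - B k - C k := by
    intro k
    rcases eq_or_ne k 0 with rfl | hk
    · have h0 : l1norm (0 : V (d'+1)) = 0 := l1_eq_zero.2 rfl
      rw [if_pos rfl, hA, hB, hC]
      unfold w0 K
      beta_reduce
      rw [if_pos rfl, if_neg (by omega), if_neg (by omega)]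
      push_cast
      ring
    · have h1k : 1 ≤ l1norm k := by
        have := l1_nonneg k
        have := (not_iff_not.2 (l1_eq_zero (k := k))).2 hk
        omega
      rw [if_neg hk, hA, hB, hC]
      unfold w0 K
      beta_reduce
      rw [if_neg hk]
      rcases eq_or_lt_of_le h1k with h | h
      · rw [if_pos h.symm, if_neg (by omega), w_of_l1_one h.symm]
        push_cast
        ring
      · rw [if_neg (by omega), if_pos (by omega)]
        push_cast
        ring
  have hTA : ∑' k, A k = ((2*((d'+1:ℕ):ℝ) + ∑' k, K (d'+1) α k : ℝ) : ℂ) * f n := by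
    rw [hA, tsum_mul_right, ← Complex.ofReal_tsum, w0_tsum d' α hα]
    push_cast
    ring
  have hTB : (∑' k, B k) = ∑' j : V (d'+1), (if l1norm (j - n) = 1 then f j else 0) := by
    rw [← (Equiv.subLeft n).tsum_eq
      (fun j : V (d'+1) => if l1norm (j - n) = 1 then f j else 0)]
    apply tsum_congr
    intro k
    simp only [Equiv.subLeft_apply, hB]
    rw [sub_sub_cancel_left, l1_neg]
  calc (∑' m : V (d'+1), if m = n then 0
      else (f n - f m) / ((((l1norm (n - m) : ℝ)) ^ (((d'+1 : ℕ) : ℝ) + α) : ℝ) : ℂ))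
      = ∑' k, (A k - B k - C k) := by rw [h1]; exact tsum_congr h2
    _ = (∑' k, A k) - (∑' k, B k) - (∑' k, C k) := by
        rw [Summable.tsum_sub (hSA.sub hSB) hSC, Summable.tsum_sub hSA hSB]
    _ = ((∑' k, K (d'+1) α k : ℝ) : ℂ) * f n
      - (∑' k : V (d'+1), ((K (d'+1) α k : ℝ) : ℂ) * f (n - k))
      - (∑' j : V (d'+1), if l1norm (j - n) = 1 then f j else 0)
      + 2 * ((d'+1 : ℕ) : ℂ) * f n := by
        rw [hTA, hTB, hC]
        push_cast
        ring

end FracAux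




/-- Operator-norm convergence of the long-range coupling to the nearest-neighbor coupling:
`‖L_α − L‖ ≤ C_d ε (1 + 1/α) 2^{−α}` with `C_d` depending only on `d`. -/
theorem frac_to_nearest_norm_bound (d : ℕ) (hd : 1 ≤ d) :
    ∃ Cd : ℝ, 0 < Cd ∧
      ∀ ε : ℝ, 0 < ε → ∀ α : ℝ, 0 < α →
        ∀ (Lα L : SeqD d →L[ℂ] SeqD d),
          HasFracActionD ε α Lα → HasNearestNeighborActionD ε L →
          ‖Lα - L‖ ≤ Cd * ε * (1 + 1 / α) * (2 : ℝ) ^ (-α) := by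
  obtain ⟨d', rfl⟩ : ∃ d', d = d' + 1 := ⟨d - 1, by omega⟩
  refine ⟨2 * 3^(d'+1), by positivity, ?_⟩
  intro ε hε α hα Lα L hLα hL
  have hKsum := FracAux.K_summable d' α hα
  have hSKnn : (0:ℝ) ≤ ∑' k, FracAux.K (d'+1) α k :=
    tsum_nonneg (fun k => FracAux.K_nonneg _ _ _)
  have hSKle := FracAux.K_tsum_le d' α hα
  apply ContinuousLinearMap.opNorm_le_bound _ (by positivity)
  intro f
  have hnorm_term : ∀ k : FracAux.V (d'+1),
      ‖((FracAux.K (d'+1) α k : ℝ) : ℂ) • FracAux.shift k f‖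
      = FracAux.K (d'+1) α k * ‖f‖ := by
    intro k
    rw [norm_smul, FracAux.norm_shift, Complex.norm_real, Real.norm_eq_abs,
      abs_of_nonneg (FracAux.K_nonneg _ _ _)]
  have hsum : Summable (fun k : FracAux.V (d'+1) =>
      ((FracAux.K (d'+1) α k : ℝ) : ℂ) • FracAux.shift k f) := by
    apply Summable.of_norm
    apply (hKsum.mul_right ‖f‖).congr
    intro k
    exact (hnorm_term k).symm
  set g : SeqD (d'+1) :=
    ∑' k : FracAux.V (d'+1), ((FracAux.K (d'+1) α k : ℝ) : ℂ) • FracAux.shift k f with hg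
  have hgn : ∀ n : FracAux.V (d'+1),
      g n = ∑' k : FracAux.V (d'+1), ((FracAux.K (d'+1) α k : ℝ) : ℂ) * f (n - k) := by
    intro n
    calc g n = FracAux.evalCLM (d'+1) n g := rfl
      _ = ∑' k : FracAux.V (d'+1), FracAux.evalCLM (d'+1) n
            (((FracAux.K (d'+1) α k : ℝ) : ℂ) • FracAux.shift k f) := by
          rw [hg]
          exact (FracAux.evalCLM (d'+1) n).map_tsum hsum
      _ = ∑' k : FracAux.V (d'+1), ((FracAux.K (d'+1) α k : ℝ) : ℂ) * f (n - k) := by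
          apply tsum_congr
          intro k
          rw [map_smul, smul_eq_mul, FracAux.evalCLM_apply, FracAux.shift_apply]
  have hgnorm : ‖g‖ ≤ (∑' k, FracAux.K (d'+1) α k) * ‖f‖ := by
    rw [hg]
    refine (norm_tsum_le_tsum_norm ?_).trans_eq ?_
    · apply (hKsum.mul_right ‖f‖).congr
      intro k
      exact (hnorm_term k).symm
    · rw [tsum_congr hnorm_term, tsum_mul_right]
  have hid : (Lα - L) f = (ε:ℂ) •
      (((∑' k, FracAux.K (d'+1) α k : ℝ) : ℂ) • f - g) := by
    apply lp.ext
    funext n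
    have hLhs : ((Lα - L) f) n = Lα f n - L f n := by
      rw [ContinuousLinearMap.sub_apply, lp.coeFn_sub, Pi.sub_apply]
    have hRhs : ((((ε:ℂ) • (((∑' k, FracAux.K (d'+1) α k : ℝ) : ℂ) • f - g) :
        SeqD (d'+1))) : ∀ _ : FracAux.V (d'+1), ℂ) n
        = (ε:ℂ) * (((∑' k, FracAux.K (d'+1) α k : ℝ) : ℂ) * f n - g n) := by
      rw [lp.coeFn_smul, Pi.smul_apply, lp.coeFn_sub, Pi.sub_apply, lp.coeFn_smul,
        Pi.smul_apply, smul_eq_mul, smul_eq_mul]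
    rw [hLhs, hLα f n, hL f n, FracAux.pointwise d' hα f n, hRhs, hgn n]
    push_cast
    ring
  have h1 : ‖(ε:ℂ)‖ = ε := by
    rw [Complex.norm_real, Real.norm_eq_abs, abs_of_pos hε]
  have hSf : ‖((∑' k, FracAux.K (d'+1) α k : ℝ) : ℂ) • f‖
      = (∑' k, FracAux.K (d'+1) α k) * ‖f‖ := by
    rw [norm_smul, Complex.norm_real, Real.norm_eq_abs, abs_of_nonneg hSKnn]
  calc ‖(Lα - L) f‖
      = ε * ‖((∑' k, FracAux.K (d'+1) α k : ℝ) : ℂ) • f - g‖ := by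
        rw [hid, norm_smul, h1]
    _ ≤ ε * (2 * (∑' k, FracAux.K (d'+1) α k) * ‖f‖) := by
        apply mul_le_mul_of_nonneg_left _ hε.le
        have := norm_sub_le (((∑' k, FracAux.K (d'+1) α k : ℝ) : ℂ) • f) g
        rw [hSf] at this
        linarith [hgnorm]
    _ ≤ ε * (2 * ((3:ℝ)^(d'+1) * ((1 + 1/α) * 2^(-α))) * ‖f‖) := by
        apply mul_le_mul_of_nonneg_left _ hε.le
        apply mul_le_mul_of_nonneg_right _ (norm_nonneg _)
        linarith [hSKle]
    _ = 2 * 3^(d'+1) * ε * (1 + 1/α) * 2^(-α) * ‖f‖ := by ring
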